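/- The metric dimension of the prime ideal sum graph PIS(ℤ/4ℤ × ℤ/2ℤ) equals 2. -/

import Mathlib

open scoped Classical

/-- The vertex set of the prime ideal sum graph: nonzero proper ideals of `R`. -/
abbrev PISVertex (R : Type*) [CommRing R] := {I : Ideal R // I ≠ ⊥ ∧ I ≠ ⊤}

/-- The prime ideal sum graph of a commutative ring `R`: vertices are nonzero proper
ideals, and two distinct vertices `I`, `J` are adjacent iff `I + J` is a prime ideal. -/
def PIS (R : Type*) [CommRing R] : SimpleGraph (PISVertex R) where
  Adj I J := I ≠ J ∧ (I.1 + J.1).IsPrime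
  symm := ⟨fun I J h => ⟨h.1.symm, by rw [add_comm]; exact h.2⟩⟩
  loopless := ⟨fun I h => h.1 rfl⟩

/-- A set `S` of vertices is a resolving set if any two distinct vertices not both in `S`
are distinguished by the distance to some vertex of `S`. -/
def IsResolvingSet {V : Type*} (G : SimpleGraph V) (S : Set V) : Prop :=
  ∀ u v : V, u ≠ v → ¬(u ∈ S ∧ v ∈ S) → ∃ w ∈ S, G.dist u w ≠ G.dist v w

/-- The metric dimension of a graph: the least cardinality of a resolving set. -/
noncomputable def metricDim {V : Type*} (G : SimpleGraph V) : ℕ∞ :=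
  ⨅ S : {S : Set V // IsResolvingSet G S}, (S : Set V).encard

/-!
Ideals of `ZMod 4 × ZMod 2` are products `I × J` of ideals of the factors, a sum of two of them
is computed componentwise, and the prime ones are `m × ⊤` and `⊤ × ⊥`, where `m = (2)`. The
nonzero proper ideals are therefore `⊥ × ⊤`, `m × ⊥`, `m × ⊤`, `⊤ × ⊥`, and `PIS` is the paw:
a triangle on the first three with a pendant edge from `m × ⊥` to `⊤ × ⊥`. Every vertex of the
paw is at equal distance from two other vertices, so no single vertex resolves it, while the
two vertices `⊥ × ⊤` and `⊤ × ⊥` do. The metric dimension is invariant under isomorphism.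
-/

namespace SimpleGraph

variable {V W : Type*} {G : SimpleGraph V} {H : SimpleGraph W}

theorem dist_eq_two_of_adj_of_adj {u v w : V} (huv : u ≠ v) (hnadj : ¬G.Adj u v)
    (huw : G.Adj u w) (hwv : G.Adj w v) : G.dist u v = 2 := by
  have hle : G.dist u v ≤ 2 := G.dist_le (.cons huw (.cons hwv .nil))
  have hpos : 0 < G.dist u v := (huw.reachable.trans hwv.reachable).pos_dist_of_ne huv
  have hne : G.dist u v ≠ 1 := mt dist_eq_one_iff_adj.1 hnadj
  omega

theorem Iso.dist_apply_le (e : G ≃g H) (u v : V) : H.dist (e u) (e v) ≤ G.dist u v := by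
  by_cases h : G.Reachable u v
  · obtain ⟨p, hp⟩ := h.exists_walk_length_eq_dist
    calc H.dist (e u) (e v) ≤ (p.map e.toHom).length := H.dist_le _
      _ = G.dist u v := by rw [Walk.length_map, hp]
  · rw [dist_eq_zero_of_not_reachable (mt Iso.reachable_iff.1 h)]
    exact Nat.zero_le _

theorem Iso.dist_apply (e : G ≃g H) (u v : V) : H.dist (e u) (e v) = G.dist u v :=
  le_antisymm (e.dist_apply_le u v) <| by simpa using e.symm.dist_apply_le (e u) (e v)

end SimpleGraph

open SimpleGraph

section MetricDimension

variable {V W : Type*} {G : SimpleGraph V} {H : SimpleGraph W}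

theorem IsResolvingSet.image (e : G ≃g H) {S : Set V} (hS : IsResolvingSet G S) :
    IsResolvingSet H (e '' S) := by
  intro u v huv huvS
  obtain ⟨w, hw, hd⟩ := hS (e.symm u) (e.symm v) (by simpa using huv) fun h ↦
    huvS ⟨⟨_, h.1, e.apply_symm_apply u⟩, ⟨_, h.2, e.apply_symm_apply v⟩⟩
  exact ⟨e w, Set.mem_image_of_mem e hw, by simpa [← e.dist_apply] using hd⟩

theorem metricDim_le_encard {S : Set V} (hS : IsResolvingSet G S) : metricDim G ≤ S.encard :=
  iInf_le (fun S : {S // IsResolvingSet G S} ↦ S.1.encard) ⟨S, hS⟩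

theorem le_metricDim {n : ℕ∞} (h : ∀ S, IsResolvingSet G S → n ≤ S.encard) :
    n ≤ metricDim G :=
  le_iInf fun S ↦ h S.1 S.2

theorem metricDim_le_of_iso (e : G ≃g H) : metricDim H ≤ metricDim G :=
  le_metricDim fun S hS ↦
    (metricDim_le_encard (hS.image e)).trans (e.injective.encard_image S).le

theorem metricDim_congr (e : G ≃g H) : metricDim G = metricDim H :=
  le_antisymm (metricDim_le_of_iso e.symm) (metricDim_le_of_iso e)

theorem two_le_metricDim [Nonempty V]
    (h : ∀ w, ∃ u v, u ≠ v ∧ u ≠ w ∧ G.dist u w = G.dist v w) :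
    2 ≤ metricDim G := by
  refine le_metricDim fun S hS ↦ ?_
  by_contra! hlt
  obtain rfl | ⟨w, rfl⟩ := Set.encard_le_one_iff_eq.1 (Order.le_of_lt_succ hlt)
  · obtain ⟨u, v, huv, -⟩ := h (Classical.arbitrary V)
    obtain ⟨w, hw, -⟩ := hS u v huv (by simp)
    exact hw
  · obtain ⟨u, v, huv, hu, hd⟩ := h w
    obtain ⟨w', rfl, hd'⟩ := hS u v huv (by simp [hu])
    exact hd' hd

end MetricDimension

def paw : SimpleGraph (Fin 4) := SimpleGraph.fromRel fun i j ↦ i = 1 ∨ (i = 0 ∧ j = 2)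

instance : DecidableRel paw.Adj := fun i j ↦ inferInstanceAs (Decidable (i ≠ j ∧ _))

theorem paw_dist (i j : Fin 4) :
    paw.dist i j = if i = j then 0 else if paw.Adj i j then 1 else 2 := by
  split_ifs with hij hadj
  · rw [hij, dist_self]
  · exact dist_eq_one_iff_adj.2 hadj
  · have hcentre : ∀ i j : Fin 4, i ≠ j → ¬paw.Adj i j → paw.Adj i 1 ∧ paw.Adj 1 j := by
      decide
    exact dist_eq_two_of_adj_of_adj hij hadj (hcentre i j hij hadj).1 (hcentre i j hij hadj).2

theorem metricDim_paw : metricDim paw = 2 := by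
  refine le_antisymm ?_ (two_le_metricDim ?_)
  · have hS : IsResolvingSet paw {0, 3} := by
      unfold IsResolvingSet
      simp only [Set.mem_insert_iff, Set.mem_singleton_iff, exists_eq_or_imp, exists_eq_left,
        paw_dist]
      decide
    simpa [Set.encard_pair] using metricDim_le_encard hS
  · simp only [paw_dist]
    decide

namespace Ideal

variable {R S : Type*} [CommRing R] [CommRing S]

theorem prod_sup_prod (I I' : Ideal R) (J J' : Ideal S) :
    prod I J ⊔ prod I' J' = prod (I ⊔ I') (J ⊔ J') :=
  ((idealProdEquiv (R := R) (S := S)).symm.map_sup (I, J) (I', J')).symm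

theorem isPrime_prod_iff {I : Ideal R} {J : Ideal S} :
    (prod I J).IsPrime ↔ (I.IsPrime ∧ J = ⊤) ∨ (I = ⊤ ∧ J.IsPrime) := by
  simp only [ideal_prod_prime, prod_inj]
  constructor
  · rintro (⟨p, hp, rfl, rfl⟩ | ⟨q, hq, rfl, rfl⟩)
    exacts [.inl ⟨hp, rfl⟩, .inr ⟨rfl, hq⟩]
  · rintro (⟨hI, rfl⟩ | ⟨rfl, hJ⟩)
    exacts [.inl ⟨I, hI, rfl, rfl⟩, .inr ⟨J, hJ, rfl, rfl⟩]

theorem not_isPrime_top : ¬(⊤ : Ideal R).IsPrime := fun h ↦ h.ne_top rfl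

end Ideal

instance : Fact (1 < 4) := ⟨by norm_num⟩

namespace ZMod4

open Ideal

def maxIdeal : Ideal (ZMod 4) := span {2}

theorem mem_maxIdeal (x : ZMod 4) : x ∈ maxIdeal ↔ x = 0 ∨ x = 2 := by
  rw [maxIdeal, mem_span_singleton']
  revert x
  decide

instance maxIdeal_isPrime : maxIdeal.IsPrime := by
  refine isPrime_iff.2 ⟨fun h ↦ ?_, fun {x y} ↦ ?_⟩
  · exact absurd ((mem_maxIdeal 1).1 (h ▸ Submodule.mem_top)) (by decide)
  · simp only [mem_maxIdeal]
    revert x y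
    decide

theorem maxIdeal_ne_bot : maxIdeal ≠ ⊥ := fun h ↦ by
  have h2 := (mem_maxIdeal 2).2 (.inr rfl)
  rw [h, mem_bot] at h2
  exact absurd h2 (by decide)

theorem maxIdeal_ne_top : maxIdeal ≠ ⊤ := maxIdeal_isPrime.ne_top

theorem ideal_eq (I : Ideal (ZMod 4)) : I = ⊥ ∨ I = maxIdeal ∨ I = ⊤ := by
  by_cases hunit : (1 : ZMod 4) ∈ I ∨ (3 : ZMod 4) ∈ I
  · refine .inr (.inr ?_)
    obtain h | h := hunit
    · exact eq_top_of_isUnit_mem I h isUnit_one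
    · exact eq_top_of_isUnit_mem I h (.of_mul_eq_one 3 (by decide))
  have hsub : ∀ x ∈ I, x = 0 ∨ x = 2 := by
    intro x hx
    obtain rfl | rfl | rfl | rfl := (by decide : ∀ y : ZMod 4, y = 0 ∨ y = 1 ∨ y = 2 ∨ y = 3) x
    exacts [.inl rfl, absurd (.inl hx) hunit, .inr rfl, absurd (.inr hx) hunit]
  by_cases h2 : (2 : ZMod 4) ∈ I
  · refine .inr (.inl (le_antisymm (fun x hx ↦ (mem_maxIdeal x).2 (hsub x hx)) ?_))
    exact (span_singleton_le_iff_mem I).2 h2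
  · refine .inl ((Submodule.eq_bot_iff I).2 fun x hx ↦ ?_)
    obtain rfl | rfl := hsub x hx
    exacts [rfl, absurd hx h2]

end ZMod4

open Ideal ZMod4

def pawIdeal : Fin 4 → Ideal (ZMod 4 × ZMod 2)
  | 0 => prod ⊥ ⊤
  | 1 => prod maxIdeal ⊥
  | 2 => prod maxIdeal ⊤
  | 3 => prod ⊤ ⊥

theorem pawIdeal_ne_bot (i : Fin 4) : pawIdeal i ≠ ⊥ := by
  fin_cases i <;> dsimp only [pawIdeal] <;>
    simp only [ne_eq, prod_eq_bot_iff, top_ne_bot, maxIdeal_ne_bot, and_false, false_and,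
      not_false_eq_true]

theorem pawIdeal_ne_top (i : Fin 4) : pawIdeal i ≠ ⊤ := by
  fin_cases i <;> dsimp only [pawIdeal] <;>
    simp only [ne_eq, prod_eq_top_iff, bot_ne_top, maxIdeal_ne_top, and_false, false_and,
      not_false_eq_true]

theorem pawIdeal_injective : Function.Injective pawIdeal := by
  intro i j h
  fin_cases i <;> fin_cases j <;> dsimp only [pawIdeal] at h <;>
    simp only [prod_inj, bot_ne_top, top_ne_bot, maxIdeal_ne_bot, maxIdeal_ne_top,
      maxIdeal_ne_bot.symm, maxIdeal_ne_top.symm, and_false, false_and] at h <;> rfl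

theorem exists_pawIdeal_eq (I : Ideal (ZMod 4 × ZMod 2)) (hbot : I ≠ ⊥) (htop : I ≠ ⊤) :
    ∃ i, pawIdeal i = I := by
  rw [ideal_prod_eq I] at hbot htop ⊢
  rcases ZMod4.ideal_eq (map (RingHom.fst _ _) I) with h₁ | h₁ | h₁ <;>
    rcases eq_bot_or_top (map (RingHom.snd _ _) I) with h₂ | h₂ <;>
    rw [h₁, h₂] at hbot htop ⊢
  exacts [absurd prod_bot_bot hbot, ⟨0, rfl⟩, ⟨1, rfl⟩, ⟨2, rfl⟩, ⟨3, rfl⟩,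
    absurd prod_top_top htop]

def pawVertex (i : Fin 4) : PISVertex (ZMod 4 × ZMod 2) :=
  ⟨pawIdeal i, pawIdeal_ne_bot i, pawIdeal_ne_top i⟩

theorem pawVertex_bijective : Function.Bijective pawVertex := by
  refine ⟨fun i j h ↦ pawIdeal_injective (congrArg Subtype.val h), fun I ↦ ?_⟩
  obtain ⟨i, hi⟩ := exists_pawIdeal_eq I.1 I.2.1 I.2.2
  exact ⟨i, Subtype.ext hi⟩

theorem pis_adj_pawVertex_iff (i j : Fin 4) :
    (PIS (ZMod 4 × ZMod 2)).Adj (pawVertex i) (pawVertex j) ↔ paw.Adj i j := by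
  change pawVertex i ≠ pawVertex j ∧ (pawIdeal i + pawIdeal j).IsPrime ↔ _
  rw [pawVertex_bijective.1.ne_iff, Submodule.add_eq_sup]
  fin_cases i <;> fin_cases j <;> dsimp only [pawIdeal] <;>
    simp only [prod_sup_prod, isPrime_prod_iff, bot_sup_eq, sup_bot_eq, sup_top_eq, top_sup_eq,
      sup_idem, not_isPrime_top, maxIdeal_isPrime, isPrime_bot, maxIdeal_ne_top, bot_ne_top,
      and_false, and_true, or_false, false_or] <;>
    decide

noncomputable def pawIsoPIS : paw ≃g PIS (ZMod 4 × ZMod 2) where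
  toEquiv := Equiv.ofBijective pawVertex pawVertex_bijective
  map_rel_iff' := pis_adj_pawVertex_iff _ _

/-- The metric dimension of `PIS (ℤ/4ℤ × ℤ/2ℤ)` equals 2. -/
theorem metricDim_PIS_Z4_Z2 : metricDim (PIS (ZMod 4 × ZMod 2)) = 2 :=
  (metricDim_congr pawIsoPIS).symm.trans metricDim_paw
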